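/- Let f : ℝ^n → ℝ be differentiable and satisfy the Regularity Condition RC(μ,λ) globally with global minimizer y⋆ = x⋆. Let α > 0 and δ ∈ ℝ. For any y ∈ ℝ^n define u = −α∇f(y) − δy and u⋆ = −δy⋆. Then −(2αδ + λα² + μδ²)‖y − y⋆‖² − 2(α + μδ)⟨u − u⋆, y − y⋆⟩ − μ‖u − u⋆‖² ≥ 0; equivalently, [y − y⋆; u − u⋆]ᵀ (M' ⊗ I_n) [y − y⋆; u − u⋆] ≥ 0 where M' = [[−(2αδ + λα² + μδ²), −(α + μδ)],[−(α + μδ), −μ]]. -/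
import Mathlib


open Matrix InnerProductSpace Kronecker

lemma quad_form_kron_eq {n : ℕ} (M : Matrix (Fin 2) (Fin 2) ℝ)
    (a b : EuclideanSpace ℝ (Fin n)) :
    (fun p : Fin 2 × Fin n => ![a, b] p.1 p.2) ⬝ᵥ
      ((M ⊗ₖ (1 : Matrix (Fin n) (Fin n) ℝ)).mulVec
        (fun p : Fin 2 × Fin n => ![a, b] p.1 p.2)) =
    M 0 0 * ⟪a,a⟫_ℝ + M 0 1 * ⟪a,b⟫_ℝ + M 1 0 * ⟪b,a⟫_ℝ + M 1 1 * ⟪b,b⟫_ℝ := by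
  simp only [dotProduct, Matrix.mulVec, Fintype.sum_prod_type, kroneckerMap_apply,
    Matrix.one_apply, Fin.sum_univ_two, PiLp.inner_apply, RCLike.inner_apply, conj_trivial,
    mul_ite, mul_one, mul_zero, Finset.sum_ite_eq, Finset.mem_univ, if_true,
    Matrix.cons_val_zero, Matrix.cons_val_one, Matrix.head_cons]
  simp only [Finset.mul_sum, ← Finset.sum_add_distrib]
  apply Finset.sum_congr rfl
  intro i _
  simp [Finset.sum_add_distrib, mul_add, mul_ite, Finset.mul_sum]
  ring

/-- Shifted quadratic bound for the feedback `u = -α ∇f(y) - δ y`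
under the global Regularity Condition RC(μ,λ). -/
theorem shifted_feedback_quadratic_bound {n : ℕ}
    (f : EuclideanSpace ℝ (Fin n) → ℝ)
    (μ lam : ℝ) (hμ : 0 < μ) (hlam : 0 < lam)
    (hdiff : Differentiable ℝ f)
    (ys : EuclideanSpace ℝ (Fin n))
    (hmin : ∀ z, f ys ≤ f z)
    (hgrad0 : gradient f ys = 0)
    (hRC : ∀ z : EuclideanSpace ℝ (Fin n),
      ⟪gradient f z, z - ys⟫_ℝ ≥ μ / 2 * ‖gradient f z‖ ^ 2 + lam / 2 * ‖z - ys‖ ^ 2)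
    (α δ : ℝ) (hα : 0 < α)
    (y u us : EuclideanSpace ℝ (Fin n))
    (hu : u = -α • gradient f y - δ • y)
    (hus : us = -δ • ys) :
    -(2 * α * δ + lam * α ^ 2 + μ * δ ^ 2) * ‖y - ys‖ ^ 2 -
      2 * (α + μ * δ) * ⟪u - us, y - ys⟫_ℝ - μ * ‖u - us‖ ^ 2 ≥ 0 ∧
    (fun p : Fin 2 × Fin n => ![y - ys, u - us] p.1 p.2) ⬝ᵥ
      ((!![-(2 * α * δ + lam * α ^ 2 + μ * δ ^ 2), -(α + μ * δ);
           -(α + μ * δ), -μ] ⊗ₖ (1 : Matrix (Fin n) (Fin n) ℝ)).mulVec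
        (fun p : Fin 2 × Fin n => ![y - ys, u - us] p.1 p.2)) ≥ 0 := by
  set G := gradient f y with hG
  set D := y - ys with hD
  have hw : u - us = (-α) • G + (-δ) • D := by
    rw [hu, hus, hD]; module
  have hiGD : ⟪u - us, D⟫_ℝ = -α * ⟪G, D⟫_ℝ + -δ * ⟪D, D⟫_ℝ := by
    rw [hw, inner_add_left, real_inner_smul_left, real_inner_smul_left]
  have hiww : ⟪u - us, u - us⟫_ℝ =
      α ^ 2 * ⟪G, G⟫_ℝ + 2 * α * δ * ⟪G, D⟫_ℝ + δ ^ 2 * ⟪D, D⟫_ℝ := by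
    rw [hw, inner_add_left, inner_add_right, inner_add_right, real_inner_smul_left,
      real_inner_smul_left, real_inner_smul_left, real_inner_smul_left,
      real_inner_smul_right, real_inner_smul_right, real_inner_smul_right,
      real_inner_smul_right, real_inner_comm D G]
    ring
  have hnw : ‖u - us‖ ^ 2 = ⟪u - us, u - us⟫_ℝ := (real_inner_self_eq_norm_sq _).symm
  have hnD : ‖D‖ ^ 2 = ⟪D, D⟫_ℝ := (real_inner_self_eq_norm_sq _).symm
  have hnG : ‖G‖ ^ 2 = ⟪G, G⟫_ℝ := (real_inner_self_eq_norm_sq _).symm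
  have hRCy := hRC y
  rw [← hG, ← hD, hnD, hnG] at hRCy
  have key : -(2 * α * δ + lam * α ^ 2 + μ * δ ^ 2) * ‖D‖ ^ 2 -
      2 * (α + μ * δ) * ⟪u - us, D⟫_ℝ - μ * ‖u - us‖ ^ 2 ≥ 0 := by
    rw [hnD, hnw, hiww, hiGD]
    nlinarith [sq_nonneg α, mul_pos hα hα]
  refine ⟨key, ?_⟩
  rw [quad_form_kron_eq]
  simp only [Matrix.cons_val', Matrix.cons_val_zero, Matrix.cons_val_one, Matrix.head_cons,
    Matrix.head_fin_const, Matrix.empty_val', Matrix.cons_val_fin_one, Matrix.of_apply]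
  have h1 : ⟪D, u - us⟫_ℝ = ⟪u - us, D⟫_ℝ := real_inner_comm _ _
  rw [h1]
  rw [hnD, hnw] at key
  linarith [key]
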